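/- Let 𝔨 be a finite-dimensional real Lie algebra, let 𝔞 be a smooth solution of the Yang–Mills–Poisson equation, and let ε ∈ {1, −1}. Then the 𝔨-valued 1-form α with components α_j = ∂_s 𝔞_j + ε (*𝔟)_j satisfies the linear first-order evolution equation ∂_s α_j = ε ∑_{k,l} ε_{jkl} ∂_k^𝔞 α_l for all j and all s ≥ 0. (Hence the self-duality or anti-self-duality defect of a Yang–Mills–Poisson solution satisfies a linear homogeneous first-order equation; if it vanishes at s = 0 and uniqueness holds, the solution is self-dual resp. anti-self-dual.) -/

import Mathlib

/-!
Write `ȧ = ∂_s 𝔞`. Differentiating the curvature in `s`, with symmetry of mixed partials and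
skew-symmetry of the bracket, gives `∂_s 𝔟_{kl} = ∂_k^𝔞 ȧ_l − ∂_l^𝔞 ȧ_k`, hence
`ε ∂_s (*𝔟)_j = ε ∑ ε_{jkl} ∂_k^𝔞 ȧ_l`, the `ȧ`-part of the right-hand side. The rest of the
right-hand side, `ε² ∑ ε_{jkl} ∂_k^𝔞 (*𝔟)_l` with `ε² = 1`, collapses by the contraction identity
`∑_l ε_{jkl} ε_{lmn} = δ_{jm}δ_{kn} − δ_{jn}δ_{km}` and skew-symmetry of `𝔟` to
`−∑_k ∂_k^𝔞 𝔟_{kj}`, which is `∂_s² 𝔞_j` by the Yang–Mills–Poisson equation.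
-/

/-- Partial derivative `∂_j f` of a function on `ℝ³` with values in a normed
real vector space. -/
noncomputable def pd3 {𝕜 : Type*} [NormedAddCommGroup 𝕜] [NormedSpace ℝ 𝕜]
    (j : Fin 3) (f : (Fin 3 → ℝ) → 𝕜) (x : Fin 3 → ℝ) : 𝕜 :=
  fderiv ℝ f x (Pi.single j 1)

/-- The Levi-Civita symbol `ε_{ijk}` on `Fin 3`. -/
noncomputable def eps (i j k : Fin 3) : ℝ :=
  ((((i : ℤ) - (j : ℤ)) * ((j : ℤ) - (k : ℤ)) * ((k : ℤ) - (i : ℤ)) : ℤ) : ℝ) / 2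

/-- Spatial curvature `𝔟_{jk}(x,s) = ∂_j 𝔞_k − ∂_k 𝔞_j + [𝔞_j, 𝔞_k]` of a
time-dependent `𝔨`-valued gauge potential, with bracket `β`. -/
noncomputable def curvK {𝔨 : Type*} [NormedAddCommGroup 𝔨] [NormedSpace ℝ 𝔨]
    (β : 𝔨 →ₗ[ℝ] 𝔨 →ₗ[ℝ] 𝔨) (𝔞 : Fin 3 → (Fin 3 → ℝ) → ℝ → 𝔨) (j k : Fin 3)
    (x : Fin 3 → ℝ) (s : ℝ) : 𝔨 :=
  pd3 j (fun y => 𝔞 k y s) x - pd3 k (fun y => 𝔞 j y s) x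
    + β (𝔞 j x s) (𝔞 k x s)

/-- The Yang–Mills–Poisson equation in temporal gauge:
`∂_s² 𝔞_j = −∑_k ∂_k^𝔞 𝔟_{kj}` where `∂_k^𝔞 ξ = ∂_k ξ + [𝔞_k, ξ]`. -/
def YangMillsPoissonK {𝔨 : Type*} [NormedAddCommGroup 𝔨] [NormedSpace ℝ 𝔨]
    (β : 𝔨 →ₗ[ℝ] 𝔨 →ₗ[ℝ] 𝔨) (𝔞 : Fin 3 → (Fin 3 → ℝ) → ℝ → 𝔨) : Prop :=
  ∀ j x (s : ℝ), 0 ≤ s →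
    deriv (fun τ => deriv (fun σ => 𝔞 j x σ) τ) s =
      -∑ k, (pd3 k (fun y => curvK β 𝔞 k j y s) x
        + β (𝔞 k x s) (curvK β 𝔞 k j x s))

open Function

section LeviCivita

variable {M : Type*} [AddCommGroup M] [Module ℝ M]

noncomputable def hodgeStar (b : Fin 3 → Fin 3 → M) (j : Fin 3) : M :=
  (1 / 2 : ℝ) • ∑ k, ∑ l, eps j k l • b k l

theorem LinearMap.map_hodgeStar {N : Type*} [AddCommGroup N] [Module ℝ N] (L : M →ₗ[ℝ] N)
    (b : Fin 3 → Fin 3 → M) (j : Fin 3) :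
    L (hodgeStar b j) = hodgeStar (fun k l => L (b k l)) j := by
  simp [hodgeStar]

theorem hodgeStar_sub_swap (X : Fin 3 → Fin 3 → M) (j : Fin 3) :
    hodgeStar (fun k l => X k l - X l k) j = ∑ k, ∑ l, eps j k l • X k l := by
  fin_cases j <;> simp [hodgeStar, eps, Fin.sum_univ_three] <;> module

/-- The contraction identity `∑_l ε_{jkl} ε_{lmn} = δ_{jm}δ_{kn} − δ_{jn}δ_{km}`, checked
componentwise. -/
theorem sum_eps_smul_hodgeStar {Z : Fin 3 → Fin 3 → Fin 3 → M}
    (hZ : ∀ k m n, Z k m n = -Z k n m) (j : Fin 3) :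
    ∑ k, ∑ l, eps j k l • hodgeStar (Z k) l = -∑ k, Z k k j := by
  have hdiag (k m : Fin 3) : Z k m m = 0 := by
    have := hZ k m m
    rwa [eq_neg_iff_add_eq_zero, ← two_smul ℝ, smul_eq_zero, or_iff_right two_ne_zero] at this
  fin_cases j <;>
    simp [hodgeStar, eps, Fin.sum_univ_three, hdiag, hZ _ 0 1, hZ _ 0 2, hZ _ 1 2] <;> module

end LeviCivita

theorem fderiv_add_smul_hodgeStar {V E : Type*} [NormedAddCommGroup V] [NormedSpace ℝ V]
    [NormedAddCommGroup E] [NormedSpace ℝ E] {v : V → E} {b : Fin 3 → Fin 3 → V → E} {x : V}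
    (hv : DifferentiableAt ℝ v x) (hb : ∀ m n, DifferentiableAt ℝ (b m n) x) (ε : ℝ)
    (l : Fin 3) (w : V) :
    fderiv ℝ (fun y => v y + ε • hodgeStar (fun m n => b m n y) l) x w
      = fderiv ℝ v x w + ε • hodgeStar (fun m n => fderiv ℝ (b m n) x w) l := by
  have hstar : HasFDerivAt (fun y => hodgeStar (fun m n => b m n y) l)
      (hodgeStar (fun m n => fderiv ℝ (b m n) x) l) x :=
    (HasFDerivAt.fun_sum fun m _ => HasFDerivAt.fun_sum fun n _ =>
      (hb m n).hasFDerivAt.const_smul _).const_smul _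
  rw [(hv.hasFDerivAt.fun_add (hstar.fun_const_smul ε)).fderiv]
  simp [hodgeStar]

section SpaceTime

variable {E : Type*} [NormedAddCommGroup E] [NormedSpace ℝ E] {u : (Fin 3 → ℝ) → ℝ → E}

noncomputable def timeDeriv (u : (Fin 3 → ℝ) → ℝ → E) (y : Fin 3 → ℝ) (σ : ℝ) : E :=
  deriv (fun τ => u y τ) σ

noncomputable def spaceDeriv (k : Fin 3) (u : (Fin 3 → ℝ) → ℝ → E) (y : Fin 3 → ℝ) (σ : ℝ) :
    E :=
  pd3 k (fun z => u z σ) y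

theorem differentiableAt_timeSlice (hu : Differentiable ℝ (uncurry u)) (y : Fin 3 → ℝ)
    (σ : ℝ) : DifferentiableAt ℝ (fun τ => u y τ) σ :=
  (hu.comp ((differentiable_const y).prodMk differentiable_id)) σ

theorem differentiableAt_spaceSlice (hu : Differentiable ℝ (uncurry u)) (y : Fin 3 → ℝ)
    (σ : ℝ) : DifferentiableAt ℝ (fun z => u z σ) y :=
  (hu.comp (differentiable_id.prodMk (differentiable_const σ))) y

theorem uncurry_timeDeriv_eq_fderiv (hu : Differentiable ℝ (uncurry u)) :
    uncurry (timeDeriv u) = fun p => fderiv ℝ (uncurry u) p (0, 1) := by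
  funext ⟨y, σ⟩
  have hslice : HasDerivAt (fun τ => (y, τ)) ((0 : Fin 3 → ℝ), (1 : ℝ)) σ :=
    (hasDerivAt_const σ y).prodMk (hasDerivAt_id σ)
  exact ((hu (y, σ)).hasFDerivAt.comp_hasDerivAt σ hslice).deriv

theorem uncurry_spaceDeriv_eq_fderiv (hu : Differentiable ℝ (uncurry u)) (k : Fin 3) :
    uncurry (spaceDeriv k u) = fun p => fderiv ℝ (uncurry u) p (Pi.single k 1, 0) := by
  funext ⟨y, σ⟩
  have hslice : HasFDerivAt (fun z => (z, σ)) (ContinuousLinearMap.inl ℝ (Fin 3 → ℝ) ℝ) y :=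
    (hasFDerivAt_id y).prodMk (hasFDerivAt_const σ y)
  show fderiv ℝ (uncurry u ∘ fun z => (z, σ)) y (Pi.single k 1) = _
  rw [((hu (y, σ)).hasFDerivAt.comp y hslice).fderiv]
  rfl

theorem ContDiff.uncurry_timeDeriv (hu : ContDiff ℝ (⊤ : ℕ∞) (uncurry u)) :
    ContDiff ℝ (⊤ : ℕ∞) (uncurry (timeDeriv u)) := by
  rw [uncurry_timeDeriv_eq_fderiv (hu.differentiable (by simp))]
  exact (hu.fderiv_right (by simp)).clm_apply contDiff_const

theorem ContDiff.uncurry_spaceDeriv (hu : ContDiff ℝ (⊤ : ℕ∞) (uncurry u)) (k : Fin 3) :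
    ContDiff ℝ (⊤ : ℕ∞) (uncurry (spaceDeriv k u)) := by
  rw [uncurry_spaceDeriv_eq_fderiv (hu.differentiable (by simp))]
  exact (hu.fderiv_right (by simp)).clm_apply contDiff_const

theorem timeDeriv_spaceDeriv (hu : ContDiff ℝ (⊤ : ℕ∞) (uncurry u)) (k : Fin 3) :
    timeDeriv (spaceDeriv k u) = spaceDeriv k (timeDeriv u) := by
  have hD : Differentiable ℝ (fderiv ℝ (uncurry u)) :=
    (hu.fderiv_right (m := ((⊤ : ℕ∞) : WithTop ℕ∞)) (by simp)).differentiable (by simp)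
  have hsecond (v w p : (Fin 3 → ℝ) × ℝ) :
      fderiv ℝ (fun q => fderiv ℝ (uncurry u) q v) p w
        = fderiv ℝ (fderiv ℝ (uncurry u)) p w v := by
    rw [fderiv_clm_apply (hD p) (differentiableAt_const v)]
    simp
  funext y σ
  have h1 := congrFun (uncurry_timeDeriv_eq_fderiv
    ((hu.uncurry_spaceDeriv k).differentiable (by simp))) (y, σ)
  have h2 := congrFun (uncurry_spaceDeriv_eq_fderiv
    (hu.uncurry_timeDeriv.differentiable (by simp)) k) (y, σ)
  rw [uncurry_spaceDeriv_eq_fderiv (hu.differentiable (by simp))] at h1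
  rw [uncurry_timeDeriv_eq_fderiv (hu.differentiable (by simp))] at h2
  simp only [uncurry_apply_pair, hsecond] at h1 h2
  have hsmooth : minSmoothness ℝ 2 ≤ ((⊤ : ℕ∞) : WithTop ℕ∞) := by
    simp only [minSmoothness_of_isRCLikeNormedField]
    exact WithTop.coe_le_coe.2 le_top
  rw [h1, h2]
  exact hu.contDiffAt.isSymmSndFDerivAt hsmooth _ _

end SpaceTime

section Gauge

variable {𝔨 : Type*} [NormedAddCommGroup 𝔨] [NormedSpace ℝ 𝔨]
  {β : 𝔨 →ₗ[ℝ] 𝔨 →ₗ[ℝ] 𝔨} {𝔞 : Fin 3 → (Fin 3 → ℝ) → ℝ → 𝔨}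

noncomputable def covDeriv (β : 𝔨 →ₗ[ℝ] 𝔨 →ₗ[ℝ] 𝔨) (𝔞 : Fin 3 → (Fin 3 → ℝ) → ℝ → 𝔨)
    (k : Fin 3) (ξ : (Fin 3 → ℝ) → ℝ → 𝔨) (y : Fin 3 → ℝ) (σ : ℝ) : 𝔨 :=
  spaceDeriv k ξ y σ + β (𝔞 k y σ) (ξ y σ)

noncomputable def selfDualityDefect (β : 𝔨 →ₗ[ℝ] 𝔨 →ₗ[ℝ] 𝔨)
    (𝔞 : Fin 3 → (Fin 3 → ℝ) → ℝ → 𝔨) (ε : ℝ) (l : Fin 3) (y : Fin 3 → ℝ) (σ : ℝ) : 𝔨 :=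
  timeDeriv (𝔞 l) y σ + ε • hodgeStar (fun m n => curvK β 𝔞 m n y σ) l

theorem covDeriv_neg (k : Fin 3) (ξ : (Fin 3 → ℝ) → ℝ → 𝔨) (y : Fin 3 → ℝ) (σ : ℝ) :
    covDeriv β 𝔞 k (fun z τ => -ξ z τ) y σ = -covDeriv β 𝔞 k ξ y σ := by
  simp only [covDeriv, spaceDeriv, pd3, fderiv_fun_neg, neg_apply, map_neg]
  abel

theorem curvK_swap (hβ : β.IsAlt) (k l : Fin 3) (y : Fin 3 → ℝ) (σ : ℝ) :
    curvK β 𝔞 k l y σ = -curvK β 𝔞 l k y σ := by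
  rw [curvK, curvK, ← hβ.neg]
  abel

theorem covDeriv_curvK_swap (hβ : β.IsAlt) (k m n : Fin 3) (y : Fin 3 → ℝ) (σ : ℝ) :
    covDeriv β 𝔞 k (curvK β 𝔞 m n) y σ = -covDeriv β 𝔞 k (curvK β 𝔞 n m) y σ := by
  rw [← covDeriv_neg]
  congr 1
  exact funext fun z => funext (curvK_swap hβ m n z)

theorem ContDiff.uncurry_curvK [FiniteDimensional ℝ 𝔨] (β : 𝔨 →ₗ[ℝ] 𝔨 →ₗ[ℝ] 𝔨) {k l : Fin 3}
    (hk : ContDiff ℝ (⊤ : ℕ∞) (uncurry (𝔞 k))) (hl : ContDiff ℝ (⊤ : ℕ∞) (uncurry (𝔞 l))) :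
    ContDiff ℝ (⊤ : ℕ∞) (uncurry (curvK β 𝔞 k l)) :=
  ((hl.uncurry_spaceDeriv k).sub (hk.uncurry_spaceDeriv l)).add
    (β.toContinuousBilinearMap.isBoundedBilinearMap.contDiff.comp (hk.prodMk hl))

theorem timeDeriv_curvK [FiniteDimensional ℝ 𝔨] (hβ : β.IsAlt) {k l : Fin 3}
    (hk : ContDiff ℝ (⊤ : ℕ∞) (uncurry (𝔞 k))) (hl : ContDiff ℝ (⊤ : ℕ∞) (uncurry (𝔞 l)))
    (y : Fin 3 → ℝ) (σ : ℝ) :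
    timeDeriv (curvK β 𝔞 k l) y σ
      = covDeriv β 𝔞 k (timeDeriv (𝔞 l)) y σ - covDeriv β 𝔞 l (timeDeriv (𝔞 k)) y σ := by
  have hasDerivAt_time {v : (Fin 3 → ℝ) → ℝ → 𝔨} (hv : ContDiff ℝ (⊤ : ℕ∞) (uncurry v)) :
      HasDerivAt (fun τ => v y τ) (timeDeriv v y σ) σ :=
    (differentiableAt_timeSlice (hv.differentiable (by simp)) y σ).hasDerivAt
  have hbracket := β.toContinuousBilinearMap.hasDerivAt_of_bilinear
    (fun _ => hasDerivAt_time hk) (fun _ => hasDerivAt_time hl)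
  have hcurv := ((hasDerivAt_time (hl.uncurry_spaceDeriv k)).fun_sub
    (hasDerivAt_time (hk.uncurry_spaceDeriv l))).fun_add hbracket
  rw [timeDeriv_spaceDeriv hl, timeDeriv_spaceDeriv hk] at hcurv
  rw [show timeDeriv (curvK β 𝔞 k l) y σ = _ from hcurv.deriv, covDeriv, covDeriv]
  simp only [LinearMap.toContinuousBilinearMap_apply, ← hβ.neg (𝔞 l y σ)]
  abel

theorem timeDeriv_selfDualityDefect [FiniteDimensional ℝ 𝔨] (hβ : β.IsAlt)
    (h𝔞 : ∀ j, ContDiff ℝ (⊤ : ℕ∞) (uncurry (𝔞 j))) (ε : ℝ) (j : Fin 3) (y : Fin 3 → ℝ)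
    (σ : ℝ) :
    timeDeriv (selfDualityDefect β 𝔞 ε j) y σ
      = timeDeriv (timeDeriv (𝔞 j)) y σ + ε • hodgeStar (fun m n =>
          covDeriv β 𝔞 m (timeDeriv (𝔞 n)) y σ - covDeriv β 𝔞 n (timeDeriv (𝔞 m)) y σ) j := by
  have h : timeDeriv (selfDualityDefect β 𝔞 ε j) y σ = timeDeriv (timeDeriv (𝔞 j)) y σ
      + ε • hodgeStar (fun m n => timeDeriv (curvK β 𝔞 m n) y σ) j :=
    fderiv_add_smul_hodgeStar
      (differentiableAt_timeSlice ((h𝔞 j).uncurry_timeDeriv.differentiable (by simp)) y σ)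
      (fun m n => differentiableAt_timeSlice
        (((h𝔞 m).uncurry_curvK β (h𝔞 n)).differentiable (by simp)) y σ) ε j 1
  simp only [h, timeDeriv_curvK hβ (h𝔞 _) (h𝔞 _)]

theorem covDeriv_selfDualityDefect [FiniteDimensional ℝ 𝔨]
    (h𝔞 : ∀ j, ContDiff ℝ (⊤ : ℕ∞) (uncurry (𝔞 j))) (ε : ℝ) (k l : Fin 3) (y : Fin 3 → ℝ)
    (σ : ℝ) :
    covDeriv β 𝔞 k (selfDualityDefect β 𝔞 ε l) y σ
      = covDeriv β 𝔞 k (timeDeriv (𝔞 l)) y σ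
          + ε • hodgeStar (fun m n => covDeriv β 𝔞 k (curvK β 𝔞 m n) y σ) l := by
  have h : spaceDeriv k (selfDualityDefect β 𝔞 ε l) y σ = spaceDeriv k (timeDeriv (𝔞 l)) y σ
      + ε • hodgeStar (fun m n => spaceDeriv k (curvK β 𝔞 m n) y σ) l :=
    fderiv_add_smul_hodgeStar
      (differentiableAt_spaceSlice ((h𝔞 l).uncurry_timeDeriv.differentiable (by simp)) y σ)
      (fun m n => differentiableAt_spaceSlice
        (((h𝔞 m).uncurry_curvK β (h𝔞 n)).differentiable (by simp)) y σ) ε l (Pi.single k 1)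
  rw [covDeriv, h, selfDualityDefect, map_add, map_smul, LinearMap.map_hodgeStar]
  simp only [covDeriv, hodgeStar, smul_add, Finset.sum_add_distrib]
  abel

end Gauge

theorem selfDuality_defect_linear_evolution_general
    (𝔨 : Type*) [NormedAddCommGroup 𝔨] [NormedSpace ℝ 𝔨] [FiniteDimensional ℝ 𝔨]
    (β : 𝔨 →ₗ[ℝ] 𝔨 →ₗ[ℝ] 𝔨)
    (halt : ∀ x : 𝔨, β x x = 0)
    (𝔞 : Fin 3 → (Fin 3 → ℝ) → ℝ → 𝔨)
    (h𝔞 : ∀ j, ContDiff ℝ (⊤ : ℕ∞) fun p : (Fin 3 → ℝ) × ℝ => 𝔞 j p.1 p.2)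
    (hYMP : YangMillsPoissonK β 𝔞)
    (ε : ℝ) (hε : ε = 1 ∨ ε = -1)
    (α : Fin 3 → (Fin 3 → ℝ) → ℝ → 𝔨)
    (hα : ∀ j x s, α j x s = deriv (fun σ => 𝔞 j x σ) s
      + ε • ((1 / 2 : ℝ) • ∑ k, ∑ l, eps j k l • curvK β 𝔞 k l x s)) :
    ∀ j x (s : ℝ), 0 ≤ s →
      deriv (fun σ => α j x σ) s =
        ε • ∑ k, ∑ l, eps j k l •
          (pd3 k (fun y => α l y s) x + β (𝔞 k x s) (α l x s)) := by
  intro j x s hs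
  obtain rfl : α = selfDualityDefect β 𝔞 ε := funext fun l => funext fun y => funext (hα l y)
  have hεε : ε * ε = 1 := by rcases hε with rfl | rfl <;> norm_num
  have hYMP' : timeDeriv (timeDeriv (𝔞 j)) x s = -∑ k, covDeriv β 𝔞 k (curvK β 𝔞 k j) x s :=
    hYMP j x s hs
  have hcurl : ∑ k, ∑ l, eps j k l •
      (ε • hodgeStar (fun m n => covDeriv β 𝔞 k (curvK β 𝔞 m n) x s) l)
      = ε • -∑ k, covDeriv β 𝔞 k (curvK β 𝔞 k j) x s := by
    simp only [smul_comm _ ε, ← Finset.smul_sum, sum_eps_smul_hodgeStar (covDeriv_curvK_swap halt · · · x s)]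
  change timeDeriv (selfDualityDefect β 𝔞 ε j) x s
    = ε • ∑ k, ∑ l, eps j k l • covDeriv β 𝔞 k (selfDualityDefect β 𝔞 ε l) x s
  rw [timeDeriv_selfDualityDefect halt h𝔞, hodgeStar_sub_swap, hYMP']
  simp only [covDeriv_selfDualityDefect h𝔞, smul_add, Finset.sum_add_distrib]
  rw [hcurl, smul_smul, hεε, one_smul, add_comm]

/-- For a smooth solution `𝔞` of the Yang–Mills–Poisson equation
(`𝔨` a finite-dimensional real Lie algebra) and `ε ∈ {1, −1}`, the 1-form
`α_j = ∂_s 𝔞_j + ε (*𝔟)_j` satisfies the linear first-order evolution equation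
`∂_s α_j = ε ∑_{k,l} ε_{jkl} ∂_k^𝔞 α_l` for all `j` and all `s ≥ 0`. -/
theorem selfDuality_defect_linear_evolution
    (𝔨 : Type*) [NormedAddCommGroup 𝔨] [NormedSpace ℝ 𝔨] [FiniteDimensional ℝ 𝔨]
    (β : 𝔨 →ₗ[ℝ] 𝔨 →ₗ[ℝ] 𝔨)
    (halt : ∀ x : 𝔨, β x x = 0)
    (hjac : ∀ x y z : 𝔨, β x (β y z) + β y (β z x) + β z (β x y) = 0)
    (𝔞 : Fin 3 → (Fin 3 → ℝ) → ℝ → 𝔨)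
    (h𝔞 : ∀ j, ContDiff ℝ (⊤ : ℕ∞) fun p : (Fin 3 → ℝ) × ℝ => 𝔞 j p.1 p.2)
    (hYMP : YangMillsPoissonK β 𝔞)
    (ε : ℝ) (hε : ε = 1 ∨ ε = -1)
    (α : Fin 3 → (Fin 3 → ℝ) → ℝ → 𝔨)
    (hα : ∀ j x s, α j x s = deriv (fun σ => 𝔞 j x σ) s
      + ε • ((1 / 2 : ℝ) • ∑ k, ∑ l, eps j k l • curvK β 𝔞 k l x s)) :
    ∀ j x (s : ℝ), 0 ≤ s →
      deriv (fun σ => α j x σ) s =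
        ε • ∑ k, ∑ l, eps j k l •
          (pd3 k (fun y => α l y s) x + β (𝔞 k x s) (α l x s)) :=
  selfDuality_defect_linear_evolution_general 𝔨 β halt 𝔞 h𝔞 hYMP ε hε α hα
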